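/- arXiv:math/9806170 — 9 statements merged into one kernel-verified Lean document; each statement's English description precedes it below -/
import Mathlib

section
/- If a, b, c are rationals with ab+1=q^2, ac+1=r^2, bc+1=s^2, and d = a+b+c+2abc+2qrs, then ad+1 = (as+qr)^2. -/
theorem stmt_0 (a b c q r s : ℚ) (hq : a * b + 1 = q ^ 2) (hr : a * c + 1 = r ^ 2)
    (hs : b * c + 1 = s ^ 2) (d : ℚ) (hd : d = a + b + c + 2 * a * b * c + 2 * q * r * s) :
    a * d + 1 = (a * s + q * r) ^ 2 := by
  subst hd
  linear_combination a^2 * hs + r^2 * hq + (1 + a*b) * hr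
end

section
/- If a, b, c are rationals with ab+1=q^2, ac+1=r^2, bc+1=s^2, and d = a+b+c+2abc+2qrs, then bd+1 is the square of a rational, namely bd+1 = (br+qs)^2. -/
theorem stmt_1 (a b c q r s : ℚ) (hq : a * b + 1 = q ^ 2) (hr : a * c + 1 = r ^ 2)
    (hs : b * c + 1 = s ^ 2) (d : ℚ) (hd : d = a + b + c + 2 * a * b * c + 2 * q * r * s) :
    b * d + 1 = (b * r + q * s) ^ 2 := by
  subst hd
  linear_combination (1 + b * c) * hq + b ^ 2 * hr + q ^ 2 * hs
end

section
/- If a, b, c are rationals with ab+1=q^2, ac+1=r^2, bc+1=s^2, and d = a+b+c+2abc+2qrs, then cd+1 = (cq+rs)^2. -/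
theorem stmt_2 (a b c q r s : ℚ) (hq : a * b + 1 = q ^ 2) (hr : a * c + 1 = r ^ 2)
    (hs : b * c + 1 = s ^ 2) (d : ℚ) (hd : d = a + b + c + 2 * a * b * c + 2 * q * r * s) :
    c * d + 1 = (c * q + r * s) ^ 2 := by
  subst hd
  linear_combination c^2 * hq + (b*c+1) * hr + r^2 * hs
end

section
/- If a, b, c are rationals with ab+1=q^2, ac+1=r^2, bc+1=s^2, and e = a+b+c+2abc-2qrs, then ae+1 = (as-qr)^2. -/
theorem stmt_3 (a b c q r s : ℚ) (hq : a * b + 1 = q ^ 2) (hr : a * c + 1 = r ^ 2)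
    (hs : b * c + 1 = s ^ 2) (e : ℚ) (he : e = a + b + c + 2 * a * b * c - 2 * q * r * s) :
    a * e + 1 = (a * s - q * r) ^ 2 := by
  subst he
  linear_combination (a^2) * hs + hq + q^2 * hr + a*c*hq
end

section
/- If a, b, c are rationals with ab+1=q^2, ac+1=r^2, bc+1=s^2, d = a+b+c+2abc+2qrs and e = a+b+c+2abc-2qrs, then each of ad+1, bd+1, cd+1, ae+1, be+1, ce+1 is a square of a rational number. -/
theorem stmt_4 (a b c q r s : ℚ) (hq : a * b + 1 = q ^ 2) (hr : a * c + 1 = r ^ 2)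
    (hs : b * c + 1 = s ^ 2) (d e : ℚ)
    (hd : d = a + b + c + 2 * a * b * c + 2 * q * r * s)
    (he : e = a + b + c + 2 * a * b * c - 2 * q * r * s) :
    (∃ y : ℚ, a * d + 1 = y ^ 2) ∧ (∃ y : ℚ, b * d + 1 = y ^ 2) ∧
    (∃ y : ℚ, c * d + 1 = y ^ 2) ∧ (∃ y : ℚ, a * e + 1 = y ^ 2) ∧
    (∃ y : ℚ, b * e + 1 = y ^ 2) ∧ (∃ y : ℚ, c * e + 1 = y ^ 2) := by
  subst hd he
  refine ⟨⟨q*r + a*s, ?_⟩, ⟨q*s + b*r, ?_⟩, ⟨r*s + c*q, ?_⟩,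
    ⟨q*r - a*s, ?_⟩, ⟨q*s - b*r, ?_⟩, ⟨r*s - c*q, ?_⟩⟩
  · linear_combination r^2*hq + (a*b+1)*hr + a^2*hs
  · linear_combination s^2*hq + b^2*hr + (a*b+1)*hs
  · linear_combination c^2*hq + s^2*hr + (a*c+1)*hs
  · linear_combination r^2*hq + (a*b+1)*hr + a^2*hs
  · linear_combination s^2*hq + b^2*hr + (a*b+1)*hs
  · linear_combination c^2*hq + s^2*hr + (a*c+1)*hs
end

section
/- Let a, k be rationals, q = ak+1, b = ak^2+2k, and c = 4q(q-a)(b-q). Then ac+1 = (q^2+ab-2aq)^2 and bc+1 = (q^2+ab-2bq)^2; in particular {a,b,c} satisfies the rational Diophantine triple conditions (each pairwise product plus 1 is a rational square). -/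
theorem stmt_7 (a k q b c : ℚ) (hq : q = a * k + 1) (hb : b = a * k ^ 2 + 2 * k)
    (hc : c = 4 * q * (q - a) * (b - q)) :
    a * c + 1 = (q ^ 2 + a * b - 2 * a * q) ^ 2 ∧
    b * c + 1 = (q ^ 2 + a * b - 2 * b * q) ^ 2 ∧
    (∃ y : ℚ, a * b + 1 = y ^ 2) ∧ (∃ y : ℚ, a * c + 1 = y ^ 2) ∧
    (∃ y : ℚ, b * c + 1 = y ^ 2) := by
  subst hq hb hc
  refine ⟨by ring, by ring, ⟨a * k + 1, by ring⟩, ⟨(a*k+1)^2 + a*(a*k^2+2*k) - 2*a*(a*k+1), by ring⟩, ⟨(a*k+1)^2 + a*(a*k^2+2*k) - 2*(a*k^2+2*k)*(a*k+1), by ring⟩⟩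
end

section
/- Let b(t) = 16t(t+1)(t+2)(2t^2+4t+1)/(16t^4+64t^3+76t^2+24t-1), d(t) = (256t^8+2048t^7+6272t^6+8960t^5+5424t^4+192t^3-888t^2-112t+33)/[16(16t^4+64t^3+76t^2+24t-1)(2t^2+4t+1)(t+1)], e(t) = (4096t^12+49152t^11+262144t^10+819200t^9+1665024t^8+2310144t^7+2233728t^6+1507584t^5+697856t^4+211968t^3+38624t^2+3520t+105)/[16(16t^4+64t^3+76t^2+24t-1)(2t^2+4t+1)(t+1)]. Then for every rational t at which all denominators are nonzero, d(t)·e(t)+1 is a square of a rational number. -/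
/-!
Over the common denominator `D = 16 (16t⁴ + 64t³ + 76t² + 24t - 1)(2t² + 4t + 1)(t + 1)` the claim
reduces to a polynomial identity `N_d N_e + D² = W²` for the numerators `N_d`, `N_e` of `d`, `e`
and an explicit polynomial `W` of degree 10; the square root of `d e + 1` is then `W / D`.
-/

theorem div_mul_div_add_one_eq_sq {K : Type*} [Field K] {a b c D : K} (hD : D ≠ 0)
    (h : a * b + D ^ 2 = c ^ 2) : a / D * (b / D) + 1 = (c / D) ^ 2 := by
  field_simp
  linear_combination h

theorem numerator_mul_add_denominator_sq {R : Type*} [CommRing R] (t : R) :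
    (256 * t ^ 8 + 2048 * t ^ 7 + 6272 * t ^ 6 + 8960 * t ^ 5 + 5424 * t ^ 4 +
        192 * t ^ 3 - 888 * t ^ 2 - 112 * t + 33) *
      (4096 * t ^ 12 + 49152 * t ^ 11 + 262144 * t ^ 10 + 819200 * t ^ 9 +
        1665024 * t ^ 8 + 2310144 * t ^ 7 + 2233728 * t ^ 6 + 1507584 * t ^ 5 +
        697856 * t ^ 4 + 211968 * t ^ 3 + 38624 * t ^ 2 + 3520 * t + 105) +
      (16 * (16 * t ^ 4 + 64 * t ^ 3 + 76 * t ^ 2 + 24 * t - 1) *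
        (2 * t ^ 2 + 4 * t + 1) * (t + 1)) ^ 2 =
    (1024 * t ^ 10 + 10240 * t ^ 9 + 43264 * t ^ 8 + 100352 * t ^ 7 +
      138560 * t ^ 6 + 114560 * t ^ 5 + 52720 * t ^ 4 + 9664 * t ^ 3 -
      1476 * t ^ 2 - 776 * t - 61) ^ 2 := by
  ring

theorem stmt_10 (t : ℚ)
    (ht : (16 * t ^ 4 + 64 * t ^ 3 + 76 * t ^ 2 + 24 * t - 1) *
      (2 * t ^ 2 + 4 * t + 1) * (t + 1) ≠ 0)
    (d e : ℚ)
    (hd : d = (256 * t ^ 8 + 2048 * t ^ 7 + 6272 * t ^ 6 + 8960 * t ^ 5 + 5424 * t ^ 4 +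
        192 * t ^ 3 - 888 * t ^ 2 - 112 * t + 33) /
      (16 * (16 * t ^ 4 + 64 * t ^ 3 + 76 * t ^ 2 + 24 * t - 1) *
        (2 * t ^ 2 + 4 * t + 1) * (t + 1)))
    (he : e = (4096 * t ^ 12 + 49152 * t ^ 11 + 262144 * t ^ 10 + 819200 * t ^ 9 +
        1665024 * t ^ 8 + 2310144 * t ^ 7 + 2233728 * t ^ 6 + 1507584 * t ^ 5 +
        697856 * t ^ 4 + 211968 * t ^ 3 + 38624 * t ^ 2 + 3520 * t + 105) /
      (16 * (16 * t ^ 4 + 64 * t ^ 3 + 76 * t ^ 2 + 24 * t - 1) *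
        (2 * t ^ 2 + 4 * t + 1) * (t + 1))) :
    ∃ w : ℚ, d * e + 1 = w ^ 2 := by
  have hD : 16 * (16 * t ^ 4 + 64 * t ^ 3 + 76 * t ^ 2 + 24 * t - 1) *
      (2 * t ^ 2 + 4 * t + 1) * (t + 1) ≠ 0 :=
    fun h => ht (by linear_combination h / 16)
  subst hd he
  exact ⟨_, div_mul_div_add_one_eq_sq hD (numerator_mul_add_denominator_sq t)⟩
end

section
/- With a(t) = (16t^4+64t^3+76t^2+24t-1)/(16(2t^2+4t+1)(t+1)) and b(t) = 16t(t+1)(t+2)(2t^2+4t+1)/(16t^4+64t^3+76t^2+24t-1), for every rational t where denominators are nonzero, a(t)·b(t)+1 is a square of a rational number. -/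
/-! The common factors cancel, so that `a * b = t * (t + 2)` and `a * b + 1 = (t + 1) ^ 2`. -/

theorem div_mul_div_eq_mul_add_two {K : Type*} [Field K] [CharZero K] (t N Q : K)
    (hN : N ≠ 0) (hQ : Q ≠ 0) (ht : t + 1 ≠ 0) :
    N / (16 * Q * (t + 1)) * (16 * t * (t + 1) * (t + 2) * Q / N) = t * (t + 2) := by
  field_simp

theorem stmt_11 (t : ℚ)
    (ht : (2 * t ^ 2 + 4 * t + 1) * (t + 1) *
      (16 * t ^ 4 + 64 * t ^ 3 + 76 * t ^ 2 + 24 * t - 1) ≠ 0)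
    (a b : ℚ)
    (ha : a = (16 * t ^ 4 + 64 * t ^ 3 + 76 * t ^ 2 + 24 * t - 1) /
      (16 * (2 * t ^ 2 + 4 * t + 1) * (t + 1)))
    (hb : b = 16 * t * (t + 1) * (t + 2) * (2 * t ^ 2 + 4 * t + 1) /
      (16 * t ^ 4 + 64 * t ^ 3 + 76 * t ^ 2 + 24 * t - 1)) :
    ∃ y : ℚ, a * b + 1 = y ^ 2 := by
  simp only [mul_ne_zero_iff] at ht
  obtain ⟨⟨hQ, ht1⟩, hN⟩ := ht
  refine ⟨t + 1, ?_⟩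
  rw [ha, hb, div_mul_div_eq_mul_add_two t _ _ hN hQ ht1]
  ring
end

section
/- If a, b, c are positive integers forming a Diophantine triple with ab+1=q^2, ac+1=r^2, bc+1=s^2 (q,r,s positive integers), and d = a+b+c+2abc+2qrs, e = a+b+c+2abc-2qrs with de ≠ 0, then de+1 is not a perfect square. -/
private lemma sq_succ_not_sq (a q : ℤ) (ha : 0 < a) (hq : 0 < q)
    (h : a * a + 1 = q ^ 2) : False := by
  have h1 : a < q := by nlinarith
  have h2 : a + 1 ≤ q := by omega
  nlinarith

private lemma aux_main (a b c q r s : ℤ) (ha : 0 < a) (hb : 0 < b) (hc : 0 < c)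
    (hq : 0 < q) (hr : 0 < r) (hs : 0 < s)
    (h1 : a * b + 1 = q ^ 2) (h2 : a * c + 1 = r ^ 2) (h3 : b * c + 1 = s ^ 2)
    (hab : a < b) (hbc : b < c)
    (hde : (a + b + c + 2*a*b*c + 2*q*r*s) * (a + b + c + 2*a*b*c - 2*q*r*s) ≠ 0)
    (w : ℤ)
    (hw : (a + b + c + 2*a*b*c + 2*q*r*s) * (a + b + c + 2*a*b*c - 2*q*r*s) + 1 = w ^ 2) :
    False := by
  -- b ≥ a + 2 and q ≥ a + 1
  have hb2 : a + 2 ≤ b := by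
    by_contra hcon
    have hba : b = a + 1 := by omega
    subst hba
    have h5 : a < q := by nlinarith
    have h6 : a + 1 ≤ q := by omega
    nlinarith
  have hqa : a + 1 ≤ q := by nlinarith
  have hq2 : 1 ≤ q ^ 2 := by nlinarith
  -- raw algebraic identities
  have hde2 : (a + b + c + 2*a*b*c + 2*q*r*s) * (a + b + c + 2*a*b*c - 2*q*r*s)
      = (c - a - b) ^ 2 - 4 * q ^ 2 := by
    linear_combination ((-4:ℤ) + 4*r*r*s*s) * h1 + (4*s*s + 4*a*b*s*s) * h2
      + (4 + 4*a*c + 4*a*b + 4*a*a*b*c) * h3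
  have hkK : (q*c - r*s) * (q * c + r * s) = c * (c - a - b) - 1 := by
    linear_combination (-(c*c):ℤ) * h1 + (s*s) * h2 + (1 + a*c) * h3
  have hce : c * (a + b + c + 2*a*b*c - 2*q*r*s) = (q*c - r*s) ^ 2 - 1 := by
    linear_combination ((c*c):ℤ) * h1 + (s*s) * h2 + (1 + a*c) * h3
  have hrp : a * (a + b + c + 2*a*b*c - 2*q*r*s) + 1 = (q * r - a * s) ^ 2 := by
    linear_combination ((r*r):ℤ) * h1 + (1 + a*b) * h2 + (a*a) * h3
  have hsp : b * (a + b + c + 2*a*b*c - 2*q*r*s) + 1 = (q * s - b * r) ^ 2 := by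
    linear_combination ((s*s):ℤ) * h1 + (b*b) * h2 + (1 + a*b) * h3
  have hI5 : c ^ 2
      - 2 * c * (a + b + (a + b + c + 2*a*b*c - 2*q*r*s)
          + 2*a*b*(a + b + c + 2*a*b*c - 2*q*r*s))
      + (a + b - (a + b + c + 2*a*b*c - 2*q*r*s)) ^ 2 - 4 * q ^ 2 = 0 := by
    linear_combination ((4:ℤ) - 4*r*r*s*s) * h1 + (-4*s*s - 4*a*b*s*s) * h2
      + (-4 - 4*a*c - 4*a*b - 4*a*a*b*c) * h3
  -- introduce opaque E, k, g
  obtain ⟨E, hEdef⟩ : ∃ x : ℤ, x = a + b + c + 2*a*b*c - 2*q*r*s := ⟨_, rfl⟩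
  obtain ⟨k, hkdef⟩ : ∃ x : ℤ, x = q*c - r*s := ⟨_, rfl⟩
  obtain ⟨g, hgdef⟩ : ∃ x : ℤ, x = c - a - b := ⟨_, rfl⟩
  rw [← hEdef] at hce hrp hsp hI5
  rw [← hkdef] at hkK hce
  rw [← hgdef] at hde2 hkK
  rw [hde2] at hw hde
  clear hde2
  -- g² = 4q² + w² - 1, g² ∉ {4q²-1, 4q²}  ⇒  g² ≥ 4q²+1
  have hg2 : g ^ 2 - 4 * q ^ 2 = w ^ 2 - 1 := by linarith
  have hgne : g ^ 2 ≠ 4 * q ^ 2 := fun h => hde (by rw [h]; ring)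
  clear hde hw
  have hgge : 4 * q ^ 2 - 1 ≤ g ^ 2 := by linarith [sq_nonneg w]
  have hgne2 : g ^ 2 ≠ 4 * q ^ 2 - 1 := by
    intro h
    rcases Int.even_or_odd g with ⟨t, ht⟩ | ⟨t, ht⟩
    · have h9 : 4 * (q ^ 2 - t ^ 2) = 1 := by rw [ht] at h; linear_combination -h
      have hdvd : (4:ℤ) ∣ 1 := ⟨q ^ 2 - t ^ 2, h9.symm⟩
      norm_num at hdvd
    · have h9 : 4 * (q ^ 2 - t ^ 2 - t) = 2 := by rw [ht] at h; linear_combination -h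
      have hdvd : (4:ℤ) ∣ 2 := ⟨q ^ 2 - t ^ 2 - t, h9.symm⟩
      norm_num at hdvd
  have hgsq : 4 * q ^ 2 + 1 ≤ g ^ 2 := by
    rcases lt_or_eq_of_le hgge with h | h
    · have h5 : 4 * q ^ 2 ≤ g ^ 2 := by linarith
      rcases lt_or_eq_of_le h5 with h' | h'
      · linarith
      · exact absurd h'.symm hgne
    · exact absurd h.symm hgne2
  -- 2q + 1 ≤ g
  have habs : 2 * q < |g| := by
    by_contra hcon
    push_neg at hcon
    have h5 : |g| ^ 2 ≤ (2 * q) ^ 2 := pow_le_pow_left₀ (abs_nonneg g) hcon 2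
    rw [sq_abs] at h5
    have e5 : (2 * q) ^ 2 = 4 * q ^ 2 := by ring
    linarith
  have hg : 2 * q + 1 ≤ g := by
    rcases abs_cases g with ⟨h, _⟩ | ⟨h, _⟩
    · rw [h] at habs; linarith
    · exfalso; rw [h] at habs; linarith [hgdef.ge, hgdef.le]
  -- g ≤ 2q²
  have hWlt : |w| ≤ g - 1 := by
    by_contra hcon
    push_neg at hcon
    have h7 : g ≤ |w| := by linarith
    have h8 : g ^ 2 ≤ |w| ^ 2 := pow_le_pow_left₀ (by linarith) h7 2
    rw [sq_abs] at h8
    linarith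
  have hgup : g ≤ 2 * q ^ 2 := by
    have h8 : |w| ^ 2 ≤ (g - 1) ^ 2 := pow_le_pow_left₀ (abs_nonneg w) hWlt 2
    rw [sq_abs] at h8
    have e5 : (g - 1) ^ 2 = g ^ 2 - 2 * g + 1 := by ring
    linarith
  clear hWlt habs hgsq hgne2 hgge hgne hg2
  -- k ≥ 2
  have hrs : 0 < r * s := mul_pos hr hs
  have hKpos : 0 < q * c + r * s := by positivity
  have hg3 : 3 ≤ g := by linarith
  have hcg : 0 < c * g - 1 := by
    have h5 : (1:ℤ) * 3 ≤ c * g :=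
      mul_le_mul (by linarith) hg3 (by norm_num) (by linarith)
    linarith
  have hk1 : 1 ≤ k := by
    by_contra hcon
    push_neg at hcon
    have h5 : k ≤ 0 := by omega
    have h6 : k * (q * c + r * s) ≤ 0 :=
      mul_nonpos_iff.mpr (Or.inr ⟨h5, hKpos.le⟩)
    linarith
  have hk2 : 2 ≤ k := by
    rcases lt_or_eq_of_le hk1 with h | h
    · omega
    · exfalso
      have h5 : q * c + r * s = c * g - 1 := by rw [← hkK, ← h]; ring
      have h6 : q * c - r * s = 1 := by rw [← hkdef, ← h]
      have h7 : c * g = c * (2 * q) := by linarith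
      have h8 : g = 2 * q := mul_left_cancel₀ (ne_of_gt hc) h7
      linarith
  -- 1 ≤ E ≤ c - 2
  have hE1 : 1 ≤ E := by
    by_contra hcon
    push_neg at hcon
    have h5 : E ≤ 0 := by omega
    have h6 : c * E ≤ 0 := mul_nonpos_of_nonneg_of_nonpos hc.le h5
    have h7 : (2:ℤ) * 2 ≤ k * k := mul_le_mul hk2 hk2 (by norm_num) (by linarith)
    have h8 : k ^ 2 = k * k := sq k
    linarith
  have hkq : k * q < g := by
    have hkrs : (1:ℤ) * 1 ≤ k * (r * s) :=
      mul_le_mul hk1 (by linarith) (by norm_num) (by linarith)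
    have e1 : (k * q) * c = k * (q * c + r * s) - k * (r * s) := by ring
    have h5 : (k * q) * c < g * c := by
      rw [e1, hkK]; linarith [hkrs]
    exact lt_of_mul_lt_mul_right h5 hc.le
  have hkc : k ≤ c - 1 := by
    have h5 : k * 1 ≤ k * q := mul_le_mul_of_nonneg_left (by linarith) (by linarith)
    linarith [hgdef.le, hgdef.ge]
  have hEc : E ≤ c - 2 := by
    have h6 : k * k ≤ (c - 1) * (c - 1) := mul_self_le_mul_self (by linarith) hkc
    have e2 : k ^ 2 = k * k := sq k
    have e3 : (c - 1) * (c - 1) = c * c - 2 * c + 1 := by ring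
    have e4 : c * (c - 2) = c * c - 2 * c := by ring
    have h5 : c * E ≤ c * (c - 2) := by linarith
    exact le_of_mul_le_mul_left h5 hc
  clear hkq hkc hk1 hcg hkK
  -- descent
  obtain ⟨S, hSdef⟩ : ∃ x : ℤ, x = a + b + E + 2*a*b*E := ⟨_, rfl⟩
  rw [show a + b + E + 2*a*b*E = a + b + E + 2*a*b*E by rfl, ← hSdef] at hI5
  have hI6 : S ^ 2 - 4 * q ^ 2 * ((a*E+1) * (b*E+1)) = (a + b - E) ^ 2 - 4 * q ^ 2 := by
    rw [hSdef]
    linear_combination (4*E*(a + b + a*b*E)) * h1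
  have hX : (c - S) ^ 2 = 4 * q ^ 2 * ((a*E+1) * (b*E+1)) := by
    linear_combination hI5 + hI6
  rcases le_or_gt S c with hcase | hcase
  -- Case A : c ≥ S
  · have hq2' : q ^ 2 = a * b + 1 := h1.symm
    have hcS1 : c - S ≤ 1 := by
      have hab0 : 0 < a * b := mul_pos ha hb
      have h6 : 1 * (1 + 2*a*b) ≤ E * (1 + 2*a*b) := by
        apply mul_le_mul_of_nonneg_right hE1; linarith
      have h7 : c - S = g - E * (1 + 2*a*b) := by
        rw [hSdef, hgdef]; ring
      have e6 : E * (1 + 2*a*b) = E + 2 * (a * b * E) := by ring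
      have e7 : 1 * (1 + 2*a*b) = 1 + 2 * (a*b) := by ring
      linarith
    have haE : 2 ≤ a * E + 1 := by
      have h11 : (1:ℤ) * 1 ≤ a * E := mul_le_mul (by linarith) hE1 (by norm_num) (by linarith)
      linarith
    have hbE : 2 ≤ b * E + 1 := by
      have h11 : (1:ℤ) * 1 ≤ b * E := mul_le_mul (by linarith) hE1 (by norm_num) (by linarith)
      linarith
    have h9 : 16 ≤ (c - S) ^ 2 := by
      rw [hX]
      have p1 : (2:ℤ) * 2 ≤ (a*E+1) * (b*E+1) :=
        mul_le_mul haE hbE (by norm_num) (by linarith)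
      have p2 : (4:ℤ) * 4 ≤ (4 * q ^ 2) * ((a*E+1) * (b*E+1)) :=
        mul_le_mul (by linarith) p1 (by norm_num) (by positivity)
      linarith
    have h10 : 0 ≤ c - S := by linarith
    have p3 : (c - S) * (c - S) ≤ 1 * 1 := mul_le_mul hcS1 hcS1 h10 (by norm_num)
    have e8 : (c - S) ^ 2 = (c - S) * (c - S) := sq (c - S)
    linarith
  -- Case B : c < S
  · have h5 : (a + b - E) ^ 2 = 2 * c * S + 4 * q ^ 2 - c ^ 2 := by linarith
    have h6 : c + 1 ≤ S := hcase
    have p : c * (c + 1) ≤ c * S := mul_le_mul_of_nonneg_left h6 hc.le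
    have e2 : c ^ 2 = c * c := sq c
    have e3 : c * (c + 1) = c * c + c := by ring
    have h7 : c ^ 2 + 2 * c + 4 * q ^ 2 ≤ (a + b - E) ^ 2 := by linarith
    have h8 : a + b - E ≤ c - 1 := by linarith
    have h9 : -(c - 1) ≤ a + b - E := by linarith
    have h10 : (a + b - E) ^ 2 ≤ (c - 1) ^ 2 := sq_le_sq' h9 h8
    have e4 : (c - 1) ^ 2 = c * c - 2 * c + 1 := by ring
    linarith
theorem stmt_17 (a b c q r s : ℤ) (ha : 0 < a) (hb : 0 < b) (hc : 0 < c)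
    (hq : 0 < q) (hr : 0 < r) (hs : 0 < s)
    (h1 : a * b + 1 = q ^ 2) (h2 : a * c + 1 = r ^ 2) (h3 : b * c + 1 = s ^ 2)
    (d e : ℤ)
    (hd : d = a + b + c + 2 * a * b * c + 2 * q * r * s)
    (he : e = a + b + c + 2 * a * b * c - 2 * q * r * s)
    (hde : d * e ≠ 0) :
    ¬ ∃ w : ℤ, d * e + 1 = w ^ 2 := by
  subst hd he
  rintro ⟨w, hw⟩
  have hab : a ≠ b := by
    intro h; subst h
    exact sq_succ_not_sq a q ha hq (by linarith)
  have hac : a ≠ c := by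
    intro h; subst h
    exact sq_succ_not_sq a r ha hr (by linarith)
  have hbc : b ≠ c := by
    intro h; subst h
    exact sq_succ_not_sq b s hb hs (by linarith)
  rcases lt_trichotomy a b with hab1 | hab1 | hab1
  · rcases lt_trichotomy b c with hbc1 | hbc1 | hbc1
    · -- a < b < c
      exact aux_main a b c q r s ha hb hc hq hr hs h1 h2 h3 hab1 hbc1
        (fun h => hde (by linear_combination h)) w (by linear_combination hw)
    · exact absurd hbc1 hbc
    · rcases lt_trichotomy a c with hac1 | hac1 | hac1
      · -- a < c < b
        exact aux_main a c b r q s ha hc hb hr hq hs h2 h1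
          (by linear_combination h3) hac1 hbc1
          (fun h => hde (by linear_combination h)) w (by linear_combination hw)
      · exact absurd hac1 hac
      · -- c < a < b
        exact aux_main c a b r s q hc ha hb hr hs hq (by linear_combination h2)
          (by linear_combination h3) (by linear_combination h1) hac1 hab1
          (fun h => hde (by linear_combination h)) w (by linear_combination hw)
  · exact absurd hab1 hab
  · rcases lt_trichotomy a c with hac1 | hac1 | hac1
    · -- b < a < c
      exact aux_main b a c q s r hb ha hc hq hs hr (by linear_combination h1)
        h3 (by linear_combination h2) hab1 hac1
        (fun h => hde (by linear_combination h)) w (by linear_combination hw)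
    · exact absurd hac1 hac
    · rcases lt_trichotomy b c with hbc1 | hbc1 | hbc1
      · -- b < c < a
        exact aux_main b c a s q r hb hc ha hs hq hr h3 (by linear_combination h1)
          (by linear_combination h2) hbc1 hac1
          (fun h => hde (by linear_combination h)) w (by linear_combination hw)
      · exact absurd hbc1 hbc
      · -- c < b < a
        exact aux_main c b a s r q hc hb ha hs hr hq (by linear_combination h3)
          (by linear_combination h2) (by linear_combination h1) hbc1 hab1
          (fun h => hde (by linear_combination h)) w (by linear_combination hw)
end
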